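/- For any connected graphs G₁ and G₂, pd(G₁ × G₂) ≤ pd(G₁) + dim(G₂), where pd denotes partition dimension, dim denotes metric dimension, and × denotes the Cartesian product. -/

import Mathlib

open SimpleGraph

/-- Distance from a vertex to a set of vertices: `min {d(v,x) : x ∈ P}`. -/
noncomputable def distToSet {V : Type*} (G : SimpleGraph V) (v : V) (P : Set V) : ℕ :=
  sInf ((G.dist v) '' P)

/-- `S` is a resolving set of `G`. -/
def IsResolvingSet {V : Type*} (G : SimpleGraph V) (S : Set V) : Prop :=
  ∀ u v : V, u ≠ v → ∃ w ∈ S, G.dist u w ≠ G.dist v w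

/-- The metric dimension of `G`. -/
noncomputable def metricDim {V : Type*} (G : SimpleGraph V) : ℕ :=
  sInf {n | ∃ S : Finset V, S.card = n ∧ IsResolvingSet G ↑S}

/-- `Π` is a resolving partition of `G`: a partition of the vertex set such that
distinct vertices have distinct vectors of distances to the parts. -/
def IsResolvingPartition {V : Type*} (G : SimpleGraph V) (Pi : Set (Set V)) : Prop :=
  Setoid.IsPartition Pi ∧
    ∀ u v : V, u ≠ v → ∃ P ∈ Pi, distToSet G u P ≠ distToSet G v P

/-- The partition dimension of `G`. -/
noncomputable def partitionDim {V : Type*} (G : SimpleGraph V) : ℕ :=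
  sInf {n | ∃ Pi : Finset (Set V), Pi.card = n ∧ IsResolvingPartition G ↑Pi}


/-!
If `Π` is a resolving partition of `G₁` and `S` a resolving set of `G₂`, the sets `A × (V₂ \ S)`
for `A ∈ Π` together with the "rows" `V₁ × {s}` for `s ∈ S` form a resolving partition of
`G₁ □ G₂`. Distances in the product add up, so the distance from `(a, b)` to `A × (V₂ \ S)` is
`d(a, A) + d(b, V₂ \ S)` and the distance to `V₁ × {s}` is `d(b, s)`. Two vertices with the same
second coordinate are separated by some `A × (V₂ \ S)`, two with different second coordinates by
some row. `V₂ \ S` is nonempty for a minimum resolving set `S`, since `V₂` minus any vertex is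
already resolving.
-/

open Set

namespace SimpleGraph

variable {α β : Type*} {G : SimpleGraph α} {H : SimpleGraph β}

lemma dist_boxProd (hG : G.Preconnected) (hH : H.Preconnected) (x y : α × β) :
    (G □ H).dist x y = G.dist x.1 y.1 + H.dist x.2 y.2 := by
  rw [dist, dist, dist, edist_boxProd,
    ENat.toNat_add (edist_ne_top_iff_reachable.2 (hG x.1 y.1))
      (edist_ne_top_iff_reachable.2 (hH x.2 y.2))]

lemma Connected.dist_ne_dist_self (hG : G.Connected) {u v : α} (huv : u ≠ v) :
    G.dist u v ≠ G.dist v v := by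
  rwa [dist_self, Ne, hG.dist_eq_zero_iff]

end SimpleGraph

open SimpleGraph

section DistToSet

variable {α β : Type*} {G : SimpleGraph α} {H : SimpleGraph β}

lemma distToSet_singleton (G : SimpleGraph α) (v s : α) : distToSet G v {s} = G.dist v s := by
  rw [distToSet, image_singleton, csInf_singleton]

lemma distToSet_eq_zero_of_mem (G : SimpleGraph α) {v : α} {P : Set α} (hv : v ∈ P) :
    distToSet G v P = 0 :=
  Nat.eq_zero_of_le_zero (Nat.sInf_le ⟨v, hv, dist_self⟩)

lemma distToSet_prod (hG : G.Preconnected) (hH : H.Preconnected) (u : α) (v : β) {A : Set α}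
    {B : Set β} (hA : A.Nonempty) (hB : B.Nonempty) :
    distToSet (G □ H) (u, v) (A ×ˢ B) = distToSet G u A + distToSet H v B := by
  apply le_antisymm
  · obtain ⟨a, ha, hua⟩ := Nat.sInf_mem (hA.image (G.dist u))
    obtain ⟨b, hb, hvb⟩ := Nat.sInf_mem (hB.image (H.dist v))
    refine Nat.sInf_le ⟨(a, b), ⟨ha, hb⟩, ?_⟩
    rw [dist_boxProd hG hH, hua, hvb]
    rfl
  · refine le_csInf ((hA.prod hB).image _) ?_
    rintro _ ⟨⟨a, b⟩, ⟨ha, hb⟩, rfl⟩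
    rw [dist_boxProd hG hH]
    exact add_le_add (Nat.sInf_le ⟨a, ha, rfl⟩) (Nat.sInf_le ⟨b, hb, rfl⟩)

end DistToSet

section Minimizers

variable {V : Type*} {G : SimpleGraph V}

lemma isResolvingSet_compl_singleton (hG : G.Connected) (v : V) : IsResolvingSet G {v}ᶜ := by
  intro x y hxy
  by_cases hx : x = v
  · subst hx
    exact ⟨y, Ne.symm hxy, hG.dist_ne_dist_self hxy⟩
  · exact ⟨x, hx, (hG.dist_ne_dist_self (Ne.symm hxy)).symm⟩

lemma exists_isResolvingSet_card_eq_metricDim [Fintype V] (hG : G.Connected) :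
    ∃ S : Finset V, S.card = metricDim G ∧ IsResolvingSet G S ∧ (S : Set V)ᶜ.Nonempty := by
  classical
  obtain ⟨v⟩ := hG.nonempty
  have hmem : (Finset.univ.erase v).card ∈ {n | ∃ S : Finset V, S.card = n ∧ IsResolvingSet G S} :=
    ⟨_, rfl, by simpa [compl_eq_univ_sdiff] using isResolvingSet_compl_singleton hG v⟩
  obtain ⟨S, hcard, hS⟩ := Nat.sInf_mem ⟨_, hmem⟩
  refine ⟨S, hcard, hS, ?_⟩
  have hlt : S.card < Finset.univ.card :=
    hcard ▸ (Nat.sInf_le hmem).trans_lt (Finset.card_erase_lt_of_mem (Finset.mem_univ v))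
  obtain ⟨w, -, hw⟩ := Finset.exists_mem_notMem_of_card_lt_card hlt
  exact ⟨w, hw⟩

lemma isResolvingPartition_range_singleton (hG : G.Connected) :
    IsResolvingPartition G (range fun v : V => ({v} : Set V)) := by
  refine ⟨⟨fun ⟨v, hv⟩ => singleton_ne_empty v hv, fun v => ⟨{v}, ⟨⟨v, rfl⟩, rfl⟩, ?_⟩⟩, ?_⟩
  · rintro _ ⟨⟨w, rfl⟩, hv⟩
    rw [mem_singleton_iff.1 hv]
  · intro x y hxy
    refine ⟨{y}, ⟨y, rfl⟩, ?_⟩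
    rw [distToSet_singleton, distToSet_singleton]
    exact hG.dist_ne_dist_self hxy

lemma exists_isResolvingPartition_card_eq_partitionDim [Fintype V] (hG : G.Connected) :
    ∃ Pi : Finset (Set V), Pi.card = partitionDim G ∧ IsResolvingPartition G Pi := by
  classical
  have hmem : (Finset.univ.image fun v : V => ({v} : Set V)).card ∈
      {n | ∃ Pi : Finset (Set V), Pi.card = n ∧ IsResolvingPartition G Pi} :=
    ⟨_, rfl, by simpa using isResolvingPartition_range_singleton hG⟩
  exact Nat.sInf_mem ⟨_, hmem⟩

end Minimizers

section BoxProdPartition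

variable {α β : Type*}

open Classical in
noncomputable def boxProdPartition (Pi : Finset (Set α)) (S : Finset β) :
    Finset (Set (α × β)) :=
  Pi.image (· ×ˢ (S : Set β)ᶜ) ∪ S.image fun s => univ ×ˢ {s}

variable {Pi : Finset (Set α)} {S : Finset β}

lemma mem_boxProdPartition {P : Set (α × β)} :
    P ∈ boxProdPartition Pi S ↔
      (∃ A ∈ Pi, A ×ˢ (S : Set β)ᶜ = P) ∨ ∃ s ∈ S, univ ×ˢ {s} = P := by
  simp [boxProdPartition]

lemma card_boxProdPartition_le : (boxProdPartition Pi S).card ≤ Pi.card + S.card :=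
  (Finset.card_union_le _ _).trans (add_le_add Finset.card_image_le Finset.card_image_le)

lemma isPartition_boxProdPartition [Nonempty α] (hPi : Setoid.IsPartition (Pi : Set (Set α)))
    (hS : (S : Set β)ᶜ.Nonempty) :
    Setoid.IsPartition (boxProdPartition Pi S : Set (Set (α × β))) := by
  refine ⟨fun h => ?_, fun ⟨a, b⟩ => ?_⟩
  · rcases mem_boxProdPartition.1 h with ⟨A, hA, hAS⟩ | ⟨s, -, hs⟩
    · exact ((Setoid.nonempty_of_mem_partition hPi hA).prod hS).ne_empty hAS
    · exact (univ_nonempty.prod (singleton_nonempty s)).ne_empty hs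
  by_cases hb : b ∈ S
  · refine ⟨univ ×ˢ {b}, ⟨mem_boxProdPartition.2 (.inr ⟨b, hb, rfl⟩), by simp⟩, ?_⟩
    rintro P ⟨hP, hab⟩
    rcases mem_boxProdPartition.1 hP with ⟨A, -, rfl⟩ | ⟨s, -, rfl⟩
    · exact absurd hb hab.2
    · rw [show b = s from hab.2]
  · obtain ⟨A, ⟨hA, haA⟩, hA_unique⟩ := hPi.2 a
    refine ⟨A ×ˢ (S : Set β)ᶜ, ⟨mem_boxProdPartition.2 (.inl ⟨A, hA, rfl⟩), haA, hb⟩, ?_⟩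
    rintro P ⟨hP, hab⟩
    rcases mem_boxProdPartition.1 hP with ⟨A', hA', rfl⟩ | ⟨s, hs, rfl⟩
    · rw [hA_unique A' ⟨hA', hab.1⟩]
    · exact absurd ((show b = s from hab.2) ▸ hs) hb

lemma isResolvingPartition_boxProdPartition {G : SimpleGraph α} {H : SimpleGraph β}
    (hG : G.Connected) (hH : H.Connected) (hPi : IsResolvingPartition G Pi)
    (hS : IsResolvingSet H S) (hSc : (S : Set β)ᶜ.Nonempty) :
    IsResolvingPartition (G □ H) (boxProdPartition Pi S) := by
  have := hG.nonempty
  refine ⟨isPartition_boxProdPartition hPi.1 hSc, ?_⟩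
  rintro ⟨a, b⟩ ⟨c, d⟩ hne
  by_cases hbd : b = d
  · subst hbd
    obtain ⟨A, hA, hdist⟩ := hPi.2 a c fun hac => hne (hac ▸ rfl)
    have hAne := Setoid.nonempty_of_mem_partition hPi.1 hA
    refine ⟨A ×ˢ (S : Set β)ᶜ, mem_boxProdPartition.2 (.inl ⟨A, hA, rfl⟩), ?_⟩
    rwa [distToSet_prod hG.preconnected hH.preconnected _ _ hAne hSc,
      distToSet_prod hG.preconnected hH.preconnected _ _ hAne hSc, Ne, Nat.add_right_cancel_iff]
  · obtain ⟨s, hs, hdist⟩ := hS b d hbd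
    refine ⟨univ ×ˢ {s}, mem_boxProdPartition.2 (.inr ⟨s, hs, rfl⟩), ?_⟩
    simpa only [distToSet_prod hG.preconnected hH.preconnected _ _ univ_nonempty
      (singleton_nonempty s), distToSet_eq_zero_of_mem G (mem_univ _), distToSet_singleton,
      zero_add] using hdist

end BoxProdPartition

theorem stmt_5 {V₁ V₂ : Type*} [Fintype V₁] [Fintype V₂]
    (G₁ : SimpleGraph V₁) (G₂ : SimpleGraph V₂)
    (hG₁ : G₁.Connected) (hG₂ : G₂.Connected) :
    partitionDim (G₁.boxProd G₂) ≤ partitionDim G₁ + metricDim G₂ := by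
  obtain ⟨Pi, hPi_card, hPi⟩ := exists_isResolvingPartition_card_eq_partitionDim hG₁
  obtain ⟨S, hS_card, hS, hSc⟩ := exists_isResolvingSet_card_eq_metricDim hG₂
  calc partitionDim (G₁.boxProd G₂)
      ≤ (boxProdPartition Pi S).card :=
        Nat.sInf_le ⟨_, rfl, isResolvingPartition_boxProdPartition hG₁ hG₂ hPi hS hSc⟩
    _ ≤ Pi.card + S.card := card_boxProdPartition_le
    _ = partitionDim G₁ + metricDim G₂ := by rw [hPi_card, hS_card]
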